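/- For every integer n ≥ 1 and every real s ≥ 0, define the (n+1)×(n+1) matrix ρ̃(s) with entries ρ̃(s)_{k,k'} = φ*_k · φ*_{k'} · sinc((k−k')π/(s+1)), where φ*_k = √(2/(n+2))·sin((k+1)π/(n+2)) and sinc(x) = sin(x)/x for x ≠ 0, sinc(0) = 1. Then tr(H·ρ̃(s)) = 2 − (2 − 4·sin²(π/(2n+4)))·sinc(π/(s+1)). -/

import Mathlib

open Real Matrix

/-- The `(n+1)×(n+1)` tridiagonal matrix `tridiag(-1, 2, -1)`. -/
noncomputable def Hmat (n : ℕ) : Matrix (Fin (n+1)) (Fin (n+1)) ℝ :=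
  Matrix.of fun i j =>
    if i = j then 2 else if ((i : ℤ) - (j : ℤ)).natAbs = 1 then -1 else 0

/-- `sinc x = sin x / x` with `sinc 0 = 1`. -/
noncomputable def sinc (x : ℝ) : ℝ := if x = 0 then 1 else Real.sin x / x

/-- The twirled probe state
`ρ̃(s)_{k,k'} = φ*_k φ*_{k'} sinc((k−k')π/(s+1))`. -/
noncomputable def ρtwirl (n : ℕ) (s : ℝ) : Matrix (Fin (n+1)) (Fin (n+1)) ℝ :=
  Matrix.of fun k k' =>
    (Real.sqrt (2 / ((n : ℝ) + 2)) * Real.sin (((k : ℝ) + 1) * π / (n + 2))) *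
    (Real.sqrt (2 / ((n : ℝ) + 2)) * Real.sin (((k' : ℝ) + 1) * π / (n + 2))) *
    _root_.sinc (((k : ℝ) - (k' : ℝ)) * π / (s + 1))

/-!
Against the tridiagonal `H`, only the diagonal of `ρ̃(s)` (where `sinc 0 = 1`) and its first
off-diagonals (where `sinc (±π/(s+1))` appears) contribute, so
`tr(H ρ̃(s)) = 2 ∑ φ*_k² - 2 sinc(π/(s+1)) ∑ φ*_k φ*_{k+1}`.
Both sums are instances of the discrete sine identity
`∑_{j=1}^N sin(jθ) sin((j+d)θ) = (N+1)/2 · cos(dθ)` for `θ = π/(N+1)`, obtained by telescoping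
the product-to-sum formulas; they equal `1` and `cos(π/(n+2)) = 1 - 2 sin²(π/(2n+4))`.
-/

open Finset

theorem two_mul_sin_mul_sum_range_cos (x θ : ℝ) (N : ℕ) :
    2 * sin θ * ∑ k ∈ range N, cos (x + 2 * k * θ)
      = sin (x + (2 * N - 1) * θ) - sin (x - θ) := by
  have step (k : ℕ) : 2 * sin θ * cos (x + 2 * k * θ)
      = sin (x + (2 * ↑(k + 1) - 1) * θ) - sin (x + (2 * k - 1) * θ) := by
    rw [two_mul_sin_mul_cos, show θ - (x + 2 * k * θ) = -(x + (2 * k - 1) * θ) by ring, sin_neg]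
    push_cast
    ring_nf
  rw [mul_sum, sum_congr rfl fun k _ => step k,
    sum_range_sub (fun k : ℕ => sin (x + (2 * k - 1) * θ))]
  congr 2
  push_cast
  ring

theorem sum_range_sin_mul_sin {N : ℕ} (hN : 0 < N) (d : ℝ) :
    ∑ j ∈ range N, sin ((j + 1) * (π / (N + 1))) * sin ((j + 1 + d) * (π / (N + 1)))
      = (N + 1) / 2 * cos (d * (π / (N + 1))) := by
  set θ := π / (N + 1) with hθ
  have hNθ : (N + 1) * θ = π := by rw [hθ]; field_simp
  have hsin : sin θ ≠ 0 := (sin_pos_of_pos_of_lt_pi (by positivity) (by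
    rw [hθ, div_lt_iff₀ (by positivity)]
    nlinarith [pi_pos, (Nat.one_le_cast (α := ℝ)).mpr hN])).ne'
  have hcos : ∑ j ∈ range N, cos ((2 + d) * θ + 2 * j * θ) = -cos (d * θ) := by
    refine mul_left_cancel₀ (mul_ne_zero two_ne_zero hsin) ?_
    rw [two_mul_sin_mul_sum_range_cos,
      show (2 + d) * θ + (2 * N - 1) * θ = (d - 1) * θ + 2 * π by rw [← hNθ]; ring,
      sin_add_two_pi, sin_sub_sin]
    ring_nf
    rw [sin_neg]
    ring
  have term (j : ℕ) : sin ((j + 1) * θ) * sin ((j + 1 + d) * θ)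
      = (cos (d * θ) - cos ((2 + d) * θ + 2 * j * θ)) / 2 := by
    have h := two_mul_sin_mul_sin ((j + 1) * θ) ((j + 1 + d) * θ)
    rw [show (j + 1) * θ - (j + 1 + d) * θ = -(d * θ) by ring, cos_neg,
      show (j + 1) * θ + (j + 1 + d) * θ = (2 + d) * θ + 2 * j * θ by ring] at h
    linarith
  rw [sum_congr rfl fun j _ => term j, ← sum_div, sum_sub_distrib, hcos, sum_const, card_range,
    nsmul_eq_mul]
  ring

noncomputable def optimalProbe (n k : ℕ) : ℝ :=
  √(2 / ((n : ℝ) + 2)) * sin (((k : ℝ) + 1) * π / (n + 2))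

theorem optimalProbe_mul_optimalProbe (n j k : ℕ) :
    optimalProbe n j * optimalProbe n k
      = 2 / (n + 2) * (sin ((j + 1) * (π / (n + 2))) * sin ((k + 1) * (π / (n + 2)))) := by
  have hsq : √(2 / ((n : ℝ) + 2)) ^ 2 = 2 / (n + 2) := sq_sqrt (by positivity)
  simp only [optimalProbe, mul_div_assoc]
  linear_combination (sin ((j + 1) * (π / (n + 2))) * sin ((k + 1) * (π / (n + 2)))) * hsq

theorem optimalProbe_succ (n : ℕ) : optimalProbe n (n + 1) = 0 := by
  have : ((n + 1 : ℕ) + 1 : ℝ) * π / (n + 2) = π := by push_cast; field_simp; ring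
  rw [optimalProbe, this, sin_pi, mul_zero]

theorem sum_range_optimalProbe_mul (n d : ℕ) :
    ∑ k ∈ range (n + 1), optimalProbe n k * optimalProbe n (k + d) = cos (d * (π / (n + 2))) := by
  have h := sum_range_sin_mul_sin n.succ_pos d
  push_cast at h
  rw [show (n : ℝ) + 1 + 1 = n + 2 by ring] at h
  simp only [optimalProbe_mul_optimalProbe, ← mul_sum, Nat.cast_add, add_right_comm _ (d : ℝ), h]
  field_simp

theorem sum_range_optimalProbe_sq (n : ℕ) : ∑ k ∈ range (n + 1), optimalProbe n k ^ 2 = 1 := by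
  simpa [sq] using sum_range_optimalProbe_mul n 0

theorem sum_range_optimalProbe_mul_succ (n : ℕ) :
    ∑ k ∈ range n, optimalProbe n k * optimalProbe n (k + 1) = cos (π / (n + 2)) := by
  simpa [sum_range_succ, optimalProbe_succ] using sum_range_optimalProbe_mul n 1

theorem sum_range_sum_range_of_tridiagonal {M : Type*} [AddCommMonoid M] (f : ℕ → ℕ → M)
    (hf : ∀ i j, i ≠ j → i + 1 ≠ j → j + 1 ≠ i → f i j = 0) (m : ℕ) :
    ∑ i ∈ range (m + 1), ∑ j ∈ range (m + 1), f i j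
      = ∑ i ∈ range (m + 1), f i i + ∑ i ∈ range m, (f i (i + 1) + f (i + 1) i) := by
  induction m with
  | zero => simp
  | succ m ih =>
    have hrow : ∑ j ∈ range (m + 1), f (m + 1) j = f (m + 1) m :=
      sum_eq_single_of_mem m (self_mem_range_succ m) fun j hj hjm => by
        rw [mem_range] at hj; exact hf _ _ (by omega) (by omega) (by omega)
    have hcol : ∑ i ∈ range (m + 1), f i (m + 1) = f m (m + 1) :=
      sum_eq_single_of_mem m (self_mem_range_succ m) fun i hi him => by
        rw [mem_range] at hi; exact hf _ _ (by omega) (by omega) (by omega)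
    simp only [sum_range_succ _ (m + 1)]
    rw [sum_add_distrib, ih, hrow, hcol, sum_range_succ (fun i => f i (i + 1) + f (i + 1) i) m]
    abel

theorem trace_Hmat_mul_of (n : ℕ) (a : ℕ → ℕ → ℝ) :
    (Hmat n * of fun i j : Fin (n + 1) => a i j).trace
      = 2 * ∑ i ∈ range (n + 1), a i i - ∑ i ∈ range n, (a i (i + 1) + a (i + 1) i) := by
  set h : ℕ → ℕ → ℝ := fun i j => if i = j then 2 else if ((i : ℤ) - j).natAbs = 1 then -1 else 0
  have htrace : (Hmat n * of fun i j : Fin (n + 1) => a i j).trace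
      = ∑ i ∈ range (n + 1), ∑ j ∈ range (n + 1), h i j * a j i := by
    simp only [trace, Matrix.diag, mul_apply, of_apply, Hmat, h, ← Fin.val_inj]
    rw [← Fin.sum_univ_eq_sum_range]
    simp only [← Fin.sum_univ_eq_sum_range (fun j => _ * a j _)]
  rw [htrace, sum_range_sum_range_of_tridiagonal _ (fun i j hij h₁ h₂ => by simp [h, hij]; omega)]
  simp [h, mul_sum, sub_eq_add_neg, ← sum_neg_distrib]

theorem cos_eq_one_sub_two_mul_sin_half_sq (x : ℝ) : cos x = 1 - 2 * sin (x / 2) ^ 2 := by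
  rw [sin_sq_eq_half_sub, mul_div_cancel₀ x two_ne_zero]
  ring

theorem twirled_state_variance_general (n : ℕ) (s : ℝ) :
    (Hmat n * ρtwirl n s).trace
      = 2 - (2 - 4 * Real.sin (π / (2 * n + 4)) ^ 2) * _root_.sinc (π / (s + 1)) := by
  set a : ℕ → ℕ → ℝ := fun k k' =>
    optimalProbe n k * optimalProbe n k' * Real.sinc ((k - k' : ℝ) * π / (s + 1))
  have hdiag (k : ℕ) : a k k = optimalProbe n k ^ 2 := by simp [a, sq]
  have hoff (k : ℕ) : a k (k + 1) + a (k + 1) k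
      = 2 * Real.sinc (π / (s + 1)) * (optimalProbe n k * optimalProbe n (k + 1)) := by
    simp only [a, Nat.cast_add, Nat.cast_one, sub_add_cancel_left, add_sub_cancel_left, neg_mul,
      one_mul, neg_div, Real.sinc_neg]
    ring
  have hhalf : π / (2 * n + 4) = π / (n + 2) / 2 := by field_simp; ring
  -- the local `sinc` unfolds to Mathlib's `Real.sinc`, so the first and last steps match by `rfl`
  calc (Hmat n * ρtwirl n s).trace = (Hmat n * of fun i j : Fin (n + 1) => a i j).trace := rfl
    _ = 2 - 2 * Real.sinc (π / (s + 1)) * cos (π / (n + 2)) := by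
      rw [trace_Hmat_mul_of, sum_congr rfl fun k _ => hdiag k, sum_congr rfl fun k _ => hoff k,
        ← mul_sum, sum_range_optimalProbe_sq, sum_range_optimalProbe_mul_succ]
      ring
    _ = 2 - (2 - 4 * sin (π / (2 * n + 4)) ^ 2) * Real.sinc (π / (s + 1)) := by
      rw [cos_eq_one_sub_two_mul_sin_half_sq, ← hhalf]
      ring

/-- Variance of the twirled probe state:
`tr(H ρ̃(s)) = 2 − (2 − 4 sin²(π/(2n+4)))·sinc(π/(s+1))`. -/
theorem twirled_state_variance (n : ℕ) (hn : 1 ≤ n) (s : ℝ) (hs : 0 ≤ s) :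
    (Hmat n * ρtwirl n s).trace
      = 2 - (2 - 4 * Real.sin (π / (2 * n + 4)) ^ 2) * _root_.sinc (π / (s + 1)) :=
  twirled_state_variance_general n s
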